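/- Let q > 1 and a ≥ 2q, and define β* = (a/(q(a−1)))·(2√q − 1 − q/a). Then 0 < β* < 1. Moreover, for every β with 0 < β ≤ β*, defining M_0(v) = A_0 − B_0·v and R_0(v) = Ã_0 − B̃_0·v (with the quantities A_l, B_l, Ã_l, B̃_l evaluated at l = 0), and for each positive integer n the function Γ_0^{(n)}(v) = (M_0(v) + R_0(v)/a)·v / ((1−v)·(1−(1−v)^n)) on (β/q, β], one has limsup_{n→∞} sup_{v ∈ (β/q, β]} Γ_0^{(n)}(v) ≤ 1. -/

import Mathlib

open Finset Filter

/-- `A_l = β q^l (1+q) - (q/a+1) β + q/a`. -/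
noncomputable def Acoef (a q β : ℝ) (l : ℕ) : ℝ := β*q^l*(1 + q) - (q/a + 1)*β + q/a

/-- `B_l = q^{2l+1}`. -/
noncomputable def Bcoef (q : ℝ) (l : ℕ) : ℝ := q^(2*l+1)

/-- `Ã_l = β(q-1)((2-a/q)l + (l-1)l/2) + βq(l+2-a/q)`. -/
noncomputable def Atil (a q β : ℝ) (l : ℕ) : ℝ :=
  β*(q - 1)*((2 - a/q)*(l:ℝ) + ((l:ℝ) - 1)*(l:ℝ)/2) + β*q*((l:ℝ) + 2 - a/q)

/-- `B̃_l = q^{l+1}(l+2-a/q)`. -/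
noncomputable def Btil (a q : ℝ) (l : ℕ) : ℝ := q^(l+1)*((l:ℝ) + 2 - a/q)


/-! With `t = q / a`, the numerator of `Γ_0^{(n)}(v)` is `(β (q + t - 1) + t - (q - 1 + 2t) v) v`,
and `β ≤ β*` means `β (q - t) ≤ 2√q - 1 - t`. Under this condition the numerator is at most
`1 - v` for `0 < v ≤ β`: the convex quadratic `1 - v - numerator` is either decreasing on `[0, β]`,
with value `(1 - β)(1 - tβ) ≥ 0` at `β`, or has nonpositive discriminant. Hence
`Γ_0^{(n)}(v) ≤ 1 / (1 - (1 - v)^n) ≤ 1 / (1 - (1 - β/q)^n) → 1`, and `Γ_0^{(n)} ≥ 0` makes the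
sequence of suprema bounded below, which the real `limsup` needs to be meaningful. -/

open Topology

lemma M_zero_add_R_zero_div_eq {a q : ℝ} (ha : a ≠ 0) (hq : q ≠ 0) (β v : ℝ) :
    (Acoef a q β 0 - Bcoef q 0 * v) + (Atil a q β 0 - Btil a q 0 * v) / a
      = β * (q + q / a - 1) + q / a - (q - 1 + 2 * (q / a)) * v := by
  simp only [Acoef, Bcoef, Atil, Btil, pow_zero, Nat.cast_zero]
  field_simp
  ring

lemma discrim_bound_of_vertex_le {s t : ℝ} (hs : 1 < s) (ht : 0 < t) (ht2 : t ≤ 1 / 2)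
    (hH : (1 + t) * (s ^ 2 - t) ≤ (2 * s - 1 - t) * (s ^ 2 - 1 + 3 * t)) :
    ((2 * s - 1 - t) * (s ^ 2 - 1 + t) + (1 + t) * (s ^ 2 - t)) ^ 2
      ≤ 4 * (s ^ 2 - 1 + 2 * t) * (s ^ 2 - t) ^ 2 := by
  obtain ⟨u, hu, rfl⟩ : ∃ u, 0 < u ∧ s = 1 + u := ⟨s - 1, by linarith, by ring⟩
  set H := (2 * (1 + u) - 1 - t) * ((1 + u) ^ 2 - 1 + 3 * t) - (1 + t) * ((1 + u) ^ 2 - t)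
  have hQ : 0 ≤ (1 - t) * H + 2 * u * t * (1 - t) * (1 + u) + 4 * u ^ 2
      + u ^ 3 * (10 - 2 * t) + 4 * u ^ 4 := by
    have : 0 ≤ H := sub_nonneg.mpr hH
    have : 0 ≤ 1 - t := by linarith
    have : 0 ≤ 10 - 2 * t := by linarith
    positivity
  have hP : 4 * ((1 + u) ^ 2 - 1 + 2 * t) * ((1 + u) ^ 2 - t) ^ 2
      - ((2 * (1 + u) - 1 - t) * ((1 + u) ^ 2 - 1 + t) + (1 + t) * ((1 + u) ^ 2 - t)) ^ 2
      = (1 - 2 * t) * ((1 - t) * H + 2 * u * t * (1 - t) * (1 + u) + 4 * u ^ 2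
        + u ^ 3 * (10 - 2 * t) + 4 * u ^ 4) := by
    ring
  nlinarith [mul_nonneg (by linarith : (0:ℝ) ≤ 1 - 2 * t) hQ]

lemma two_mul_sqrt_sub_one_lt {q : ℝ} (hq : 1 < q) : 2 * √q - 1 < q := by
  have hs : √q ≠ 1 := by simpa using hq.ne'
  nlinarith [Real.sq_sqrt (by linarith : (0:ℝ) ≤ q), sq_pos_of_ne_zero (sub_ne_zero.2 hs)]

lemma lt_one_of_mul_le_two_mul_sqrt_sub {q t β : ℝ} (hq : 1 < q) (ht : t < q)
    (hβ : β * (q - t) ≤ 2 * √q - 1 - t) : β < 1 := by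
  by_contra! h
  nlinarith [mul_le_mul_of_nonneg_right h (sub_nonneg.2 ht.le), two_mul_sqrt_sub_one_lt hq]

lemma numerator_le_one_sub {q t β v : ℝ} (hq : 1 < q) (ht : 0 < t) (ht2 : t ≤ 1 / 2)
    (hβ : β * (q - t) ≤ 2 * √q - 1 - t) (hv : 0 < v) (hvβ : v ≤ β) :
    (β * (q + t - 1) + t - (q - 1 + 2 * t) * v) * v ≤ 1 - v := by
  have hβ1 := lt_one_of_mul_le_two_mul_sqrt_sub hq (by linarith) hβ
  obtain ⟨s, hs, rfl⟩ : ∃ s, 1 < s ∧ q = s ^ 2 :=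
    ⟨√q, Real.lt_sqrt_of_sq_lt (by simpa using hq), (Real.sq_sqrt (by linarith)).symm⟩
  rw [Real.sqrt_sq (by linarith)] at hβ
  have hst : 0 < s ^ 2 - t := by nlinarith
  rcases le_or_gt (β * (s ^ 2 - 1 + 3 * t)) (1 + t) with hvertex | hvertex
  · have hdecr :
        0 ≤ (β - v) * ((1 + t - β * (s ^ 2 - 1 + 3 * t)) + (s ^ 2 - 1 + 2 * t) * (β - v)) :=
      mul_nonneg (by linarith) (by nlinarith)
    have hend : 0 ≤ (1 - β) * (1 - t * β) := mul_nonneg (by linarith) (by nlinarith)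
    nlinarith
  · -- `X` increases with `β`, so the discriminant bound reduces to the extremal `β`
    set X := β * (s ^ 2 - 1 + t) + 1 + t
    have hE : 0 ≤ s ^ 2 - 1 + t := by nlinarith
    have hX : X * (s ^ 2 - t) ≤ (2 * s - 1 - t) * (s ^ 2 - 1 + t) + (1 + t) * (s ^ 2 - t) := by
      nlinarith [mul_le_mul_of_nonneg_right hβ hE]
    have hH : (1 + t) * (s ^ 2 - t) ≤ (2 * s - 1 - t) * (s ^ 2 - 1 + 3 * t) := by
      nlinarith [mul_le_mul_of_nonneg_right hβ (by nlinarith : (0:ℝ) ≤ s ^ 2 - 1 + 3 * t)]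
    have hdiscr : X ^ 2 ≤ 4 * (s ^ 2 - 1 + 2 * t) := by
      have hX0 : 0 ≤ X * (s ^ 2 - t) := mul_nonneg (by nlinarith) hst.le
      have := (pow_le_pow_left₀ hX0 hX 2).trans (discrim_bound_of_vertex_le hs ht ht2 hH)
      rw [mul_pow] at this
      exact le_of_mul_le_mul_right this (by positivity)
    nlinarith [sq_nonneg (2 * (s ^ 2 - 1 + 2 * t) * v - X)]

lemma div_mul_one_sub_pow_le {N w r : ℝ} (hw : 0 < w) (hwr : w ≤ r) (hr : r < 1) (hN : N ≤ w)
    (n : ℕ) : N / (w * (1 - w ^ n)) ≤ (1 - r ^ n)⁻¹ := by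
  rcases n.eq_zero_or_pos with rfl | hn
  · simp
  have hrn : r ^ n < 1 := pow_lt_one₀ (hw.le.trans hwr) hr hn.ne'
  have hwn : w ^ n ≤ r ^ n := pow_le_pow_left₀ hw.le hwr n
  have hden : 0 < w * (1 - w ^ n) := mul_pos hw (by linarith)
  calc N / (w * (1 - w ^ n)) ≤ w / (w * (1 - w ^ n)) := by gcongr
    _ = (1 - w ^ n)⁻¹ := by rw [div_mul_eq_div_div, div_self hw.ne', one_div]
    _ ≤ (1 - r ^ n)⁻¹ := inv_anti₀ (by linarith) (by linarith)

lemma tendsto_inv_one_sub_pow {r : ℝ} (h0 : 0 ≤ r) (h1 : r < 1) :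
    Tendsto (fun n : ℕ => (1 - r ^ n)⁻¹) atTop (𝓝 1) := by
  simpa using ((tendsto_pow_atTop_nhds_zero_of_lt_one h0 h1).const_sub 1).inv₀ (by norm_num)

lemma limsup_le_of_le_of_tendsto {ι : Type*} {l : Filter ι} [l.NeBot] {f g : ι → ℝ} {m L : ℝ}
    (hm : ∀ᶠ i in l, m ≤ f i) (hfg : ∀ᶠ i in l, f i ≤ g i) (hg : Tendsto g l (𝓝 L)) :
    limsup f l ≤ L :=
  (limsup_le_limsup hfg (isCoboundedUnder_le_of_eventually_le l hm)
    hg.isBoundedUnder_le).trans_eq hg.limsup_eq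

noncomputable def gammaZero (a q β : ℝ) (n : ℕ) (v : ℝ) : ℝ :=
  ((Acoef a q β 0 - Bcoef q 0 * v) + (Atil a q β 0 - Btil a q 0 * v) / a) * v
    / ((1 - v) * (1 - (1 - v) ^ n))

lemma gammaZero_nonneg {a q β v : ℝ} (ha : 0 < a) (hq : 1 < q) (hβ : β ≤ 1) (hv : 0 ≤ v)
    (hvβ : v ≤ β) (n : ℕ) : 0 ≤ gammaZero a q β n v := by
  rw [gammaZero, M_zero_add_R_zero_div_eq ha.ne' (by linarith)]
  have ht : 0 < q / a := div_pos (by linarith) ha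
  have hnum : 0 ≤ β * (q + q / a - 1) + q / a - (q - 1 + 2 * (q / a)) * v := by
    nlinarith [mul_nonneg (by linarith : (0:ℝ) ≤ q - 1 + 2 * (q / a)) (sub_nonneg.2 hvβ)]
  have hpow : (1 - v) ^ n ≤ 1 := pow_le_one₀ (by linarith) (by linarith)
  exact div_nonneg (mul_nonneg hnum hv) (mul_nonneg (by linarith) (by linarith))

lemma gammaZero_le {a q β v : ℝ} (ha : 2 * q ≤ a) (hq : 1 < q) (hβ0 : 0 < β)
    (hβ : β * (q - q / a) ≤ 2 * √q - 1 - q / a) (hv : β / q < v) (hvβ : v ≤ β) (n : ℕ) :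
    gammaZero a q β n v ≤ (1 - (1 - β / q) ^ n)⁻¹ := by
  have ha0 : 0 < a := by linarith
  have ht : 0 < q / a := div_pos (by linarith) ha0
  have ht2 : q / a ≤ 1 / 2 := by rw [div_le_iff₀ ha0]; linarith
  have hβ1 := lt_one_of_mul_le_two_mul_sqrt_sub hq (by linarith) hβ
  have hβq : 0 < β / q := div_pos hβ0 (by linarith)
  rw [gammaZero, M_zero_add_R_zero_div_eq ha0.ne' (by linarith)]
  exact div_mul_one_sub_pow_le (by linarith) (by linarith) (by linarith)
    (numerator_le_one_sub hq ht ht2 hβ (hβq.trans hv) hvβ) n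

/-- With `β* = (a/(q(a-1)))(2√q - 1 - q/a)` one has `0 < β* < 1`, and
for every `0 < β ≤ β*` the functions
`Γ_0^{(n)}(v) = (M_0(v) + R_0(v)/a) v / ((1-v)(1-(1-v)^n))` on `(β/q, β]`
satisfy `limsup_{n→∞} sup_{v ∈ (β/q, β]} Γ_0^{(n)}(v) ≤ 1`. -/
theorem stmt_11
    (q a : ℝ) (hq : 1 < q) (ha : 2*q ≤ a)
    (βstar : ℝ) (hβstar : βstar = a/(q*(a - 1)) * (2*Real.sqrt q - 1 - q/a)) :
    0 < βstar ∧ βstar < 1 ∧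
    ∀ β : ℝ, 0 < β → β ≤ βstar →
      Filter.limsup (fun n : ℕ =>
          sSup ((fun v : ℝ =>
            ((Acoef a q β 0 - Bcoef q 0 * v) + (Atil a q β 0 - Btil a q 0 * v)/a) * v
              / ((1 - v) * (1 - (1 - v)^n))) '' Set.Ioc (β/q) β))
        Filter.atTop ≤ 1 := by
  have ha0 : 0 < a := by linarith
  have ht2 : q / a ≤ 1 / 2 := by rw [div_le_iff₀ ha0]; linarith
  have hqt : 0 < q - q / a := by linarith
  have hβstar_mul : βstar * (q - q / a) = 2 * √q - 1 - q / a := by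
    rw [hβstar]
    field_simp [show a - 1 ≠ 0 by linarith]
  have hnum : 0 < 2 * √q - 1 - q / a := by
    have : 1 < √q := Real.lt_sqrt_of_sq_lt (by simpa using hq)
    linarith
  refine ⟨pos_of_mul_pos_left (hβstar_mul ▸ hnum) hqt.le,
    lt_one_of_mul_le_two_mul_sqrt_sub hq (by linarith) hβstar_mul.le, fun β hβ0 hβ => ?_⟩
  replace hβ : β * (q - q / a) ≤ 2 * √q - 1 - q / a :=
    hβstar_mul ▸ mul_le_mul_of_nonneg_right hβ hqt.le
  have hβ1 := lt_one_of_mul_le_two_mul_sqrt_sub hq (by linarith) hβ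
  have hβq : 0 < β / q := div_pos hβ0 (by linarith)
  have hβq1 : β / q < 1 := (div_lt_one (by linarith)).2 (by linarith)
  change limsup (fun n => sSup (gammaZero a q β n '' Set.Ioc (β / q) β)) atTop ≤ 1
  refine limsup_le_of_le_of_tendsto (m := 0) (.of_forall fun n => ?_) (.of_forall fun n => ?_)
    (tendsto_inv_one_sub_pow (r := 1 - β / q) (by linarith) (by linarith))
  · exact Real.sSup_nonneg <| Set.forall_mem_image.2 fun v hv =>
      gammaZero_nonneg ha0 hq hβ1.le (hβq.trans hv.1).le hv.2 n
  · exact Real.sSup_le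
      (Set.forall_mem_image.2 fun v hv => gammaZero_le ha hq hβ0 hβ hv.1 hv.2 n)
      (inv_nonneg.2 (sub_nonneg.2 (pow_le_one₀ (by linarith) (by linarith))))
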